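/- On U = {(t,r,θ,φ) ∈ ℝ⁴ : sin θ ≠ 0}, let X₁ = (0,0, sin φ, (cos θ/sin θ)cos φ), X₂ = (0,0, −cos φ, (cos θ/sin θ)sin φ), X₃ = (0,0,0,1) be the SO(3) symmetry vector fields, and define the functions f_I^î : U → ℝ (I, î ∈ {1,2,3}) with the only nonzero components f₁^1 = cos φ / sin θ and f₂^1 = sin φ / sin θ. Let C^k̂_{îĵ} be the structure constants of the isotropy algebra ([λ₁,λ₂] = −λ₃, [λ₁,λ₃] = λ₂, [λ₂,λ₃] = −λ₁, extended antisymmetrically in the lower indices) and C^K_{IJ} the structure constants of the symmetry algebra ([X₁,X₂] = −X₃, [X₁,X₃] = X₂, [X₂,X₃] = −X₁, extended antisymmetrically). Then for all I, J, k̂ and all x ∈ U: X_I(f_J^k̂)(x) − X_J(f_I^k̂)(x) − Σ_{î,ĵ} f_I^î(x) f_J^ĵ(x) C^k̂_{îĵ} = Σ_K C^K_{IJ} f_K^k̂(x), where X(f) denotes the directional derivative of f along the vector field X. -/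

import Mathlib

open Finset

/- Coordinates are `(t, r, θ, φ) = (x 0, x 1, x 2, x 3)`. -/

/-- The SO(3) symmetry vector fields X₁, X₂, X₃. -/
noncomputable def XSO3 : Fin 3 → (Fin 4 → ℝ) → (Fin 4 → ℝ) :=
  ![fun x => ![0, 0, Real.sin (x 3), (Real.cos (x 2) / Real.sin (x 2)) * Real.cos (x 3)],
    fun x => ![0, 0, -Real.cos (x 3), (Real.cos (x 2) / Real.sin (x 2)) * Real.sin (x 3)],
    fun _ => ![0, 0, 0, 1]]

/-- The functions `f I î`; the only nonzero components are
`f₁¹ = cos φ / sin θ` and `f₂¹ = sin φ / sin θ`. -/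
noncomputable def fSO3 : Fin 3 → Fin 3 → (Fin 4 → ℝ) → ℝ :=
  ![![fun x => Real.cos (x 3) / Real.sin (x 2), fun _ => 0, fun _ => 0],
    ![fun x => Real.sin (x 3) / Real.sin (x 2), fun _ => 0, fun _ => 0],
    ![fun _ => 0, fun _ => 0, fun _ => 0]]

/-- The structure constants of so(3): `[λ₁,λ₂] = −λ₃`, `[λ₁,λ₃] = λ₂`,
`[λ₂,λ₃] = −λ₁`, extended antisymmetrically; `CSO3 k i j` is `C^k_{ij}`.
These are also the structure constants of the symmetry algebra. -/
def CSO3 : Fin 3 → Fin 3 → Fin 3 → ℝ :=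
  ![![![0, 0, 0], ![0, 0, -1], ![0, 1, 0]],
    ![![0, 0, 1], ![0, 0, 0], ![-1, 0, 0]],
    ![![0, -1, 0], ![1, 0, 0], ![0, 0, 0]]]

/-!
Only the component `f^1` (index `0` here) is nonzero and `C^k_{11} = 0`, so the quadratic
term vanishes. Writing `f_I^1 = a_I(φ) / sin θ` with `a = (cos, sin, 0)`, the quotient rule
gives every `X_I(f_J^1)` in closed form, and the identity for `k = 1` reduces to
trigonometric algebra.
-/

open Real

lemma fderiv_comp_apply_div_comp_apply {n : ℕ} {i j : Fin n} {u w : ℝ → ℝ} {u' w' : ℝ}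
    {x : Fin n → ℝ} (hu : HasDerivAt u u' (x j)) (hw : HasDerivAt w w' (x i))
    (hx : w (x i) ≠ 0) (v : Fin n → ℝ) :
    fderiv ℝ (fun y => u (y j) / w (y i)) x v
      = (u' * v j * w (x i) - u (x j) * (w' * v i)) / w (x i) ^ 2 := by
  have hnum : HasFDerivAt (fun y : Fin n → ℝ => u (y j)) (u' • .proj j) x :=
    hu.comp_hasFDerivAt (f := fun y : Fin n → ℝ => y j) x (hasFDerivAt_apply (𝕜 := ℝ) j x)
  have hinv : HasFDerivAt (fun y : Fin n → ℝ => (w (y i))⁻¹)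
      ((-w' / w (x i) ^ 2) • .proj i) x :=
    (hw.inv hx).comp_hasFDerivAt (f := fun y : Fin n → ℝ => y i) x
      (hasFDerivAt_apply (𝕜 := ℝ) i x)
  simp only [div_eq_mul_inv]
  rw [(hnum.fun_mul hinv).fderiv]
  simp only [add_apply, smul_apply, ContinuousLinearMap.proj_apply, smul_eq_mul]
  field_simp
  ring

noncomputable def fSO3Numerator : Fin 3 → ℝ → ℝ := ![cos, sin, 0]

lemma hasDerivAt_fSO3Numerator (I : Fin 3) (t : ℝ) :
    HasDerivAt (fSO3Numerator I) (![-sin t, cos t, 0] I) t := by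
  fin_cases I
  · exact hasDerivAt_cos t
  · exact hasDerivAt_sin t
  · exact hasDerivAt_const t 0

lemma fSO3_zero_apply (I : Fin 3) (y : Fin 4 → ℝ) :
    fSO3 I 0 y = fSO3Numerator I (y 3) / sin (y 2) := by
  fin_cases I <;> simp [fSO3, fSO3Numerator]

lemma fSO3_eq_zero_of_ne_zero (I : Fin 3) {k : Fin 3} (hk : k ≠ 0) : fSO3 I k = 0 := by
  fin_cases I <;> fin_cases k <;> first | exact absurd rfl hk | rfl

lemma fderiv_fSO3_zero_apply (I : Fin 3) {x : Fin 4 → ℝ} (hx : sin (x 2) ≠ 0)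
    (v : Fin 4 → ℝ) :
    fderiv ℝ (fSO3 I 0) x v
      = (![-sin (x 3), cos (x 3), 0] I * v 3 * sin (x 2)
          - fSO3Numerator I (x 3) * (cos (x 2) * v 2))
        / sin (x 2) ^ 2 := by
  rw [show fSO3 I 0 = fun y => fSO3Numerator I (y 3) / sin (y 2) from
    funext (fSO3_zero_apply I)]
  exact fderiv_comp_apply_div_comp_apply (hasDerivAt_fSO3Numerator I _) (hasDerivAt_sin _) hx v

lemma sum_fSO3_mul_fSO3_mul_CSO3 (I J k : Fin 3) (x : Fin 4 → ℝ) :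
    ∑ i, ∑ j, fSO3 I i x * fSO3 J j x * CSO3 k i j = 0 := by
  refine Fintype.sum_eq_zero _ fun i => Fintype.sum_eq_zero _ fun j => ?_
  by_cases hi : i = 0
  · by_cases hj : j = 0
    · subst hi hj
      fin_cases k <;> simp [CSO3]
    · simp [fSO3_eq_zero_of_ne_zero J hj]
  · simp [fSO3_eq_zero_of_ne_zero I hi]

theorem stmt_15 (I J k : Fin 3) (x : Fin 4 → ℝ) (hx : Real.sin (x 2) ≠ 0) :
    fderiv ℝ (fSO3 J k) x (XSO3 I x) - fderiv ℝ (fSO3 I k) x (XSO3 J x)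
      - ∑ i, ∑ j, fSO3 I i x * fSO3 J j x * CSO3 k i j
    = ∑ K, CSO3 K I J * fSO3 K k x := by
  rw [sum_fSO3_mul_fSO3_mul_CSO3, sub_zero]
  by_cases hk : k = 0
  · subst hk
    simp only [fderiv_fSO3_zero_apply _ hx, fSO3_zero_apply, Fin.sum_univ_three]
    fin_cases I <;> fin_cases J <;>
      simp only [XSO3, fSO3Numerator, CSO3, Fin.isValue, Fin.zero_eta, Fin.mk_one,
        Fin.reduceFinMk, Matrix.cons_val_zero, Matrix.cons_val_one, Matrix.cons_val,
        Pi.zero_apply] <;>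
      field_simp <;> ring
  · simp [fSO3_eq_zero_of_ne_zero _ hk]
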